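/- arXiv:2410.17058 — 4 statements merged into one kernel-verified Lean document; each statement's English description precedes it below -/
import Mathlib

section
/- The DC Fourier coefficient of the piecewise-constant friction applied to a shifted sinusoid is σ^(0) = (1/π)(-Δπ + (1+Δ)·arccos(a)). That is, (1/(2π)) ∫_{-θ}^{2π-θ} σ_DF(a + cos(s + θ)) ds = (1/π)(-Δπ + (1+Δ)·arccos(a)). -/
open Real
open MeasureTheory intervalIntegral

theorem stmt_2 (Δ a θ : ℝ) (hΔ : 0 < Δ) (hΔ1 : Δ < 1) (ha : 0 < a) (ha1 : a < 1)
    (σDF : ℝ → ℝ) (hσ : ∀ v : ℝ, σDF v = if v ≥ 0 then -Δ else 1) :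
    (1 / (2 * π)) * ∫ s in (-θ)..(2 * π - θ), σDF (a + Real.cos (s + θ))
      = (1 / π) * (-Δ * π + (1 + Δ) * Real.arccos a) := by
  have hπ := Real.pi_pos
  set r := Real.arccos a with hr
  have hr0 : 0 ≤ r := Real.arccos_nonneg a
  have hrπ : r ≤ π := Real.arccos_le_pi a
  have hcos : Real.cos r = a := Real.cos_arccos (by linarith) (le_of_lt ha1)
  set c := π - r with hc
  have hc0 : 0 ≤ c := by simp [hc]; linarith
  have hcπ : c ≤ π := by simp [hc]; linarith
  have hcosc : Real.cos c = -a := by rw [hc, Real.cos_pi_sub, hcos]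
  set f : ℝ → ℝ := fun t => σDF (a + Real.cos t) with hfdef
  have hmeas : Measurable f := by
    simp only [hfdef, hσ]
    exact Measurable.ite (measurableSet_le measurable_const
      (measurable_const.add Real.measurable_cos)) measurable_const measurable_const
  have hint : ∀ u v : ℝ, IntervalIntegrable f volume u v := by
    intro u v
    rw [intervalIntegrable_iff]
    apply Measure.integrableOn_of_bounded (M := max |Δ| 1) (measure_Ioc_lt_top.ne)
      hmeas.aestronglyMeasurable
    filter_upwards with x
    simp only [hfdef, hσ]
    split
    · simp only [norm_neg, Real.norm_eq_abs]; exact le_max_left _ _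
    · simp only [Real.norm_eq_abs, abs_one]; exact le_max_right _ _
  -- change of variables
  have hcov : (∫ s in (-θ)..(2 * π - θ), σDF (a + Real.cos (s + θ)))
      = ∫ t in (0:ℝ)..(2 * π), f t := by
    rw [show (∫ s in (-θ)..(2 * π - θ), σDF (a + Real.cos (s + θ)))
        = ∫ s in (-θ)..(2 * π - θ), f (s + θ) from rfl,
      intervalIntegral.integral_comp_add_right f θ]
    norm_num
  -- piece values
  have hval1 : ∀ t ∈ Set.uIcc (0:ℝ) c, f t = -Δ := by
    intro t ht
    rw [Set.uIcc_of_le hc0] at ht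
    have h1 : Real.cos c ≤ Real.cos t :=
      Real.cos_le_cos_of_nonneg_of_le_pi ht.1 hcπ ht.2
    simp only [hfdef, hσ]
    rw [if_pos]; rw [hcosc] at h1; linarith
  have hval3 : ∀ t ∈ Set.uIcc (2 * π - c) (2 * π), f t = -Δ := by
    intro t ht
    rw [Set.uIcc_of_le (by linarith)] at ht
    have h2 : Real.cos (2 * π - t) = Real.cos t := by
      rw [Real.cos_sub]; simp [Real.cos_two_pi, Real.sin_two_pi]
    have h1 : Real.cos c ≤ Real.cos (2 * π - t) :=
      Real.cos_le_cos_of_nonneg_of_le_pi (by linarith [ht.2]) hcπ (by linarith [ht.1])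
    rw [h2, hcosc] at h1
    simp only [hfdef, hσ]
    rw [if_pos]; linarith
  have hval2 : ∀ t ∈ Set.Ioo c (2 * π - c), f t = 1 := by
    intro t ht
    have hlt : Real.cos t < -a := by
      rcases le_or_gt t π with h | h
      · have := Real.cos_lt_cos_of_nonneg_of_le_pi hc0 h ht.1
        linarith [hcosc ▸ this]
      · have h2 : Real.cos (2 * π - t) = Real.cos t := by
          rw [Real.cos_sub]; simp [Real.cos_two_pi, Real.sin_two_pi]
        have := Real.cos_lt_cos_of_nonneg_of_le_pi (x := c) (y := 2 * π - t) hc0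
          (by linarith) (by linarith [ht.2])
        rw [h2] at this
        linarith [hcosc ▸ this]
    simp only [hfdef, hσ]
    rw [if_neg]; push_neg; linarith
  -- compute the three pieces
  have hI1 : (∫ t in (0:ℝ)..c, f t) = -Δ * c := by
    rw [intervalIntegral.integral_congr hval1]
    simp [mul_comm]
  have hI3 : (∫ t in (2 * π - c)..(2 * π), f t) = -Δ * c := by
    rw [intervalIntegral.integral_congr hval3]
    simp; ring
  have hI2 : (∫ t in c..(2 * π - c), f t) = 2 * π - 2 * c := by
    have hcc : c ≤ 2 * π - c := by linarith
    have hcong : (∫ t in c..(2 * π - c), f t) = ∫ t in c..(2 * π - c), (1:ℝ) := by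
      apply intervalIntegral.integral_congr_ae
      have h0 : (volume : Measure ℝ) {2 * π - c} = 0 := measure_singleton _
      filter_upwards [compl_mem_ae_iff.mpr h0] with x hx hmem
      rw [Set.uIoc_of_le hcc] at hmem
      have hx' : x ≠ 2 * π - c := hx
      exact hval2 x ⟨hmem.1, lt_of_le_of_ne hmem.2 hx'⟩
    rw [hcong]
    simp; ring
  have hsplit : (∫ t in (0:ℝ)..(2 * π), f t)
      = (∫ t in (0:ℝ)..c, f t) + (∫ t in c..(2 * π - c), f t)
        + (∫ t in (2 * π - c)..(2 * π), f t) := by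
    rw [intervalIntegral.integral_add_adjacent_intervals (hint 0 c) (hint c (2 * π - c)),
      intervalIntegral.integral_add_adjacent_intervals (hint 0 (2 * π - c)) (hint (2 * π - c) (2 * π))]
  rw [hcov, hsplit, hI1, hI2, hI3]
  have : c = π - r := hc
  field_simp
  ring
end

section
/- The first cosine Fourier coefficient of the piecewise-constant friction applied to a shifted sinusoid is (1/π) ∫_{-θ}^{2π-θ} σ_DF(a + cos(s + θ)) cos(s) ds = -(2(1+Δ)/π) cos(θ) √(1 - a²). -/
open Real

theorem stmt_3 (Δ a θ : ℝ) (hΔ : 0 < Δ) (hΔ1 : Δ < 1) (ha : 0 < a) (ha1 : a < 1)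
    (σDF : ℝ → ℝ) (hσ : ∀ v : ℝ, σDF v = if v ≥ 0 then -Δ else 1) :
    (1 / π) * ∫ s in (-θ)..(2 * π - θ), σDF (a + Real.cos (s + θ)) * Real.cos s
      = -(2 * (1 + Δ) / π) * Real.cos θ * Real.sqrt (1 - a ^ 2) := by
  have hpi : (0:ℝ) < π := Real.pi_pos
  set c := Real.arccos (-a) with hc_def
  have hC : Real.cos c = -a := Real.cos_arccos (by linarith) (by linarith)
  have hS : Real.sin c = Real.sqrt (1 - a ^ 2) := by
    rw [hc_def, Real.sin_arccos]; ring_nf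
  have hc0 : 0 < c := Real.arccos_pos.2 (by linarith)
  have hcπ : c < π := by
    rw [hc_def, Real.arccos_neg]; linarith [Real.arccos_pos.2 ha1]
  -- the integrand as a function of t = s + θ
  set f : ℝ → ℝ := fun t => σDF (a + Real.cos t) * Real.cos (t - θ) with hf_def
  have hshift : (∫ s in (-θ)..(2 * π - θ), σDF (a + Real.cos (s + θ)) * Real.cos s)
      = ∫ t in (0:ℝ)..(2 * π), f t := by
    have := intervalIntegral.integral_comp_add_right (a := -θ) (b := 2 * π - θ) f θ
    rw [show (-θ + θ) = (0:ℝ) by ring, show (2 * π - θ + θ) = 2 * π by ring] at this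
    simp only [hf_def, add_sub_cancel_right] at this
    exact this
  -- integrability of f on any interval
  have hmeas : Measurable f := by
    have : f = fun t => (if a + Real.cos t ≥ 0 then -Δ else (1:ℝ)) * Real.cos (t - θ) := by
      funext t; simp [hf_def, hσ]
    rw [this]
    apply Measurable.mul
    · exact Measurable.ite (measurableSet_le measurable_const (by fun_prop)) measurable_const
        measurable_const
    · fun_prop
  have hInt : ∀ u v : ℝ, IntervalIntegrable f MeasureTheory.volume u v := by
    intro u v
    refine (intervalIntegrable_const (c := (1 + Δ : ℝ))).mono_fun
      hmeas.aestronglyMeasurable ?_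
    refine Filter.Eventually.of_forall fun t => ?_
    simp only [hf_def, hσ, Real.norm_eq_abs, abs_mul]
    have h1 : |if a + Real.cos t ≥ 0 then -Δ else (1:ℝ)| ≤ 1 + Δ := by
      split
      · rw [abs_neg, abs_of_nonneg hΔ.le]; linarith
      · rw [abs_one]; linarith
    calc |if a + Real.cos t ≥ 0 then -Δ else (1:ℝ)| * |Real.cos (t - θ)|
        ≤ (1 + Δ) * 1 := by
          apply mul_le_mul h1 (Real.abs_cos_le_one _) (abs_nonneg _) (by linarith)
      _ ≤ |1 + Δ| := by rw [abs_of_nonneg (by linarith)]; linarith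
  -- split the integral
  have hsplit : (∫ t in (0:ℝ)..(2 * π), f t)
      = (∫ t in (0:ℝ)..c, f t) + (∫ t in c..(2 * π - c), f t)
        + (∫ t in (2 * π - c)..(2 * π), f t) := by
    rw [intervalIntegral.integral_add_adjacent_intervals (hInt 0 c) (hInt c (2 * π - c)),
      intervalIntegral.integral_add_adjacent_intervals (hInt 0 (2 * π - c))
        (hInt (2 * π - c) (2 * π))]
  -- helper: integral of cos (t - θ)
  have hcosint : ∀ u v : ℝ, (∫ t in u..v, Real.cos (t - θ))
      = Real.sin (v - θ) - Real.sin (u - θ) := by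
    intro u v
    rw [intervalIntegral.integral_comp_sub_right (fun x => Real.cos x) θ,
      integral_cos]
  -- piece 1
  have hE1 : (∫ t in (0:ℝ)..c, f t) = -Δ * (Real.sin (c - θ) - Real.sin (0 - θ)) := by
    have : (∫ t in (0:ℝ)..c, f t) = ∫ t in (0:ℝ)..c, -Δ * Real.cos (t - θ) := by
      apply intervalIntegral.integral_congr
      intro t ht
      rw [Set.uIcc_of_le (le_of_lt hc0)] at ht
      have h1 : Real.cos c ≤ Real.cos t :=
        Real.cos_le_cos_of_nonneg_of_le_pi ht.1 (le_of_lt hcπ) ht.2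
      have : a + Real.cos t ≥ 0 := by rw [hC] at h1; linarith
      simp [hf_def, hσ, this]
    rw [this, intervalIntegral.integral_const_mul, hcosint]
  -- piece 3
  have hE3 : (∫ t in (2 * π - c)..(2 * π), f t)
      = -Δ * (Real.sin (2 * π - θ) - Real.sin (2 * π - c - θ)) := by
    have : (∫ t in (2 * π - c)..(2 * π), f t)
        = ∫ t in (2 * π - c)..(2 * π), -Δ * Real.cos (t - θ) := by
      apply intervalIntegral.integral_congr
      intro t ht
      rw [Set.uIcc_of_le (by linarith)] at ht
      have hct : Real.cos t = Real.cos (2 * π - t) := (Real.cos_two_pi_sub t).symm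
      have h1 : Real.cos c ≤ Real.cos (2 * π - t) :=
        Real.cos_le_cos_of_nonneg_of_le_pi (by linarith [ht.2]) (le_of_lt hcπ)
          (by linarith [ht.1])
      have : a + Real.cos t ≥ 0 := by rw [hct]; rw [hC] at h1; linarith
      simp [hf_def, hσ, this]
    rw [this, intervalIntegral.integral_const_mul, hcosint]
  -- piece 2
  have hE2 : (∫ t in c..(2 * π - c), f t)
      = Real.sin (2 * π - c - θ) - Real.sin (c - θ) := by
    have hne : ∀ᵐ x : ℝ, x ≠ 2 * π - c := by
      rw [MeasureTheory.ae_iff]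
      simpa [not_not, Set.setOf_eq_eq_singleton] using
        MeasureTheory.measure_singleton (μ := MeasureTheory.volume) (2 * π - c)
    have : (∫ t in c..(2 * π - c), f t) = ∫ t in c..(2 * π - c), Real.cos (t - θ) := by
      apply intervalIntegral.integral_congr_ae
      filter_upwards [hne] with x hx hmem
      rw [Set.uIoc_of_le (by linarith)] at hmem
      have hx2 : x < 2 * π - c := lt_of_le_of_ne hmem.2 hx
      have hcos : Real.cos x < -a := by
        rcases le_or_gt x π with hxle | hxgt
        · have := Real.strictAntiOn_cos ⟨le_of_lt hc0, le_of_lt hcπ⟩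
            ⟨by linarith [hmem.1], hxle⟩ hmem.1
          rw [hC] at this; exact this
        · have hmem2 : 2 * π - x ∈ Set.Icc (0:ℝ) π := ⟨by linarith, by linarith⟩
          have := Real.strictAntiOn_cos ⟨le_of_lt hc0, le_of_lt hcπ⟩ hmem2 (by linarith)
          rw [hC, Real.cos_two_pi_sub] at this; exact this
      have hneg : ¬ (a + Real.cos x ≥ 0) := by simp; linarith
      simp [hf_def, hσ, hneg]
    rw [this, hcosint]
  rw [hshift, hsplit, hE1, hE2, hE3]
  simp only [Real.sin_sub, Real.cos_sub, Real.sin_two_pi, Real.cos_two_pi, Real.sin_zero,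
    Real.cos_zero, hS]
  field_simp
  ring
end

section
/- The first sine Fourier coefficient of the piecewise-constant friction applied to a shifted sinusoid is (1/π) ∫_{-θ}^{2π-θ} σ_DF(a + cos(s + θ)) sin(s) ds = (2(1+Δ)/π) sin(θ) √(1 - a²). -/
/-!
After the substitution `t = s + θ`, the friction law takes the value `1` exactly on the arc
`arccos (-a) < t < 2π - arccos (-a)` where `cos t < -a`, and `-Δ` elsewhere. Writing it as
`-Δ + (1 + Δ) · 1_arc`, the constant part integrates `sin (t - θ)` over a full period to `0`,
and the arc contributes `(1 + Δ) (cos (c - θ) - cos (c + θ)) = 2 (1 + Δ) sin c sin θ` with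
`c = arccos (-a)`, `sin c = √(1 - a²)`.
-/

open Real MeasureTheory Set

namespace Real

theorem cos_lt_iff_arccos_lt {b t : ℝ} (hb : b ≤ 1) (ht₀ : 0 ≤ t) (htπ : t ≤ π) :
    cos t < b ↔ arccos b < t := by
  rcases lt_or_ge b (-1) with hb₁ | hb₁
  · rw [arccos_of_le_neg_one hb₁.le]
    constructor <;> intro h <;> linarith [neg_one_le_cos t]
  · conv_lhs => rw [← cos_arccos hb₁ hb]
    exact strictAntiOn_cos.lt_iff_gt ⟨ht₀, htπ⟩ ⟨arccos_nonneg b, arccos_le_pi b⟩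

theorem Ioc_inter_cos_lt_eq_Ioo {b : ℝ} (hb : b ≤ 1) :
    Ioc 0 (2 * π) ∩ {t | cos t < b} = Ioo (arccos b) (2 * π - arccos b) := by
  have hc₀ := arccos_nonneg b
  have hcπ := arccos_le_pi b
  ext t
  simp only [mem_inter_iff, mem_Ioc, mem_ofPred_eq, mem_Ioo]
  rcases le_total t π with ht | ht
  · by_cases ht₀ : 0 ≤ t
    · rw [cos_lt_iff_arccos_lt hb ht₀ ht]
      exact ⟨fun h => ⟨h.2, by linarith⟩, fun h => ⟨⟨by linarith, by linarith⟩, h.1⟩⟩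
    · exact ⟨fun ⟨⟨h, _⟩, _⟩ => by linarith, fun ⟨h, _⟩ => by linarith⟩
  · by_cases ht₂ : t ≤ 2 * π
    · rw [← cos_two_pi_sub, cos_lt_iff_arccos_lt hb (by linarith) (by linarith)]
      exact ⟨fun h => ⟨by linarith, by linarith⟩, fun h => ⟨⟨by linarith, ht₂⟩, by linarith⟩⟩
    · exact ⟨fun ⟨⟨h, _⟩, _⟩ => by linarith, fun ⟨h, _⟩ => by linarith⟩

theorem integral_indicator_cos_lt {b : ℝ} (hb : b ≤ 1) (g : ℝ → ℝ) :
    ∫ t in 0..(2 * π), {t | cos t < b}.indicator g t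
      = ∫ t in arccos b..(2 * π - arccos b), g t := by
  have hcπ := arccos_le_pi b
  have hmeas : MeasurableSet {t | cos t < b} :=
    measurableSet_lt continuous_cos.measurable measurable_const
  rw [intervalIntegral.integral_of_le (by positivity), intervalIntegral.integral_of_le (by linarith),
    integral_indicator hmeas, Measure.restrict_restrict hmeas, inter_comm,
    Ioc_inter_cos_lt_eq_Ioo hb, integral_Ioc_eq_integral_Ioo]

theorem integral_sin_sub (x y θ : ℝ) : ∫ t in x..y, sin (t - θ) = cos (x - θ) - cos (y - θ) := by
  rw [intervalIntegral.integral_comp_sub_right (fun t => sin t), integral_sin]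

theorem integral_step_cos_mul_sin_sub {b : ℝ} (hb₁ : -1 ≤ b) (hb₂ : b ≤ 1) (p q θ : ℝ) :
    ∫ t in 0..(2 * π), (if b + cos t ≥ 0 then p else q) * sin (t - θ)
      = 2 * (q - p) * sin θ * √(1 - b ^ 2) := by
  let g : ℝ → ℝ := fun t => sin (t - θ)
  have hg : Continuous g := by fun_prop
  have hsplit : ∀ t, (if b + cos t ≥ 0 then p else q) * sin (t - θ)
      = p * g t + (q - p) * {t | cos t < -b}.indicator g t := by
    intro t
    by_cases h : cos t < -b
    · simp [g, indicator_of_mem (show t ∈ {t | cos t < -b} from h),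
        show ¬ b + cos t ≥ 0 by linarith]
      ring
    · simp [g, indicator_of_notMem (show t ∉ {t | cos t < -b} from h),
        show b + cos t ≥ 0 by linarith]
  have hind : IntervalIntegrable ({t | cos t < -b}.indicator g) volume 0 (2 * π) := by
    have hs : MeasurableSet {t | cos t < -b} :=
      measurableSet_lt continuous_cos.measurable measurable_const
    obtain ⟨h₁, h₂⟩ := hg.intervalIntegrable (μ := volume) 0 (2 * π)
    exact ⟨h₁.indicator hs, h₂.indicator hs⟩
  simp_rw [hsplit]
  rw [intervalIntegral.integral_add ((hg.intervalIntegrable _ _).const_mul p) (hind.const_mul _),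
    intervalIntegral.integral_const_mul, intervalIntegral.integral_const_mul,
    integral_indicator_cos_lt (by linarith), integral_sin_sub, integral_sin_sub]
  have hc : cos (arccos (-b)) = -b := cos_arccos (by linarith) (by linarith)
  rw [zero_sub, cos_neg, cos_two_pi_sub, sub_sub, cos_two_pi_sub, cos_sub, cos_add, hc,
    sin_arccos, neg_sq]
  ring

end Real

theorem stmt_4_general (Δ a θ : ℝ) (ha : 0 < a) (ha1 : a < 1)
    (σDF : ℝ → ℝ) (hσ : ∀ v : ℝ, σDF v = if v ≥ 0 then -Δ else 1) :
    (1 / π) * ∫ s in (-θ)..(2 * π - θ), σDF (a + Real.cos (s + θ)) * Real.sin s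
      = (2 * (1 + Δ) / π) * Real.sin θ * Real.sqrt (1 - a ^ 2) := by
  have hshift := intervalIntegral.integral_comp_add_right (a := -θ) (b := 2 * π - θ)
    (fun t => σDF (a + cos t) * sin (t - θ)) θ
  simp only [add_sub_cancel_right, neg_add_cancel, sub_add_cancel] at hshift
  rw [hshift, funext hσ, integral_step_cos_mul_sin_sub (by linarith) ha1.le]
  ring

theorem stmt_4 (Δ a θ : ℝ) (hΔ : 0 < Δ) (hΔ1 : Δ < 1) (ha : 0 < a) (ha1 : a < 1)
    (σDF : ℝ → ℝ) (hσ : ∀ v : ℝ, σDF v = if v ≥ 0 then -Δ else 1) :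
    (1 / π) * ∫ s in (-θ)..(2 * π - θ), σDF (a + Real.cos (s + θ)) * Real.sin s
      = (2 * (1 + Δ) / π) * Real.sin θ * Real.sqrt (1 - a ^ 2) :=
  stmt_4_general Δ a θ ha ha1 σDF hσ
end

section
/- Under the hypotheses of the previous statement, with φ twice differentiable, A(1) > 0, c < π_f (so that sin φ(1) = 1), and φ'(1) ≠ 0, the second derivative of v at ω = 1 satisfies v''(1) = -(a π_f/(2ζ)) (φ'(1))² < 0, so ω = 1 is a strict local maximum of the average center-of-mass speed. -/
/-!
At `ω = 1` the second equation forces `cos (φ 1) = 0`, and the first one makes `sin (φ 1)`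
positive, so `sin (φ 1) = 1`. Since `v` is affine in `sin ∘ φ`, its derivatives are those of
`sin ∘ φ`, namely `cos φ · φ'`, which vanishes at `1`, and `-sin φ · φ'² + cos φ · φ''`, which
equals `-φ'(1)²` there. The second derivative test then gives the local maximum.
-/

open Real Filter Topology

lemma Real.sin_eq_one_of_cos_eq_zero_of_pos {x : ℝ} (hcos : cos x = 0) (hsin : 0 < sin x) :
    sin x = 1 := by
  nlinarith [sin_sq_add_cos_sq x, sin_le_one x]

lemma deriv_const_mul_sub_const (k p c : ℝ) (f : ℝ → ℝ) :
    deriv (fun x => k * (p * f x - c)) = fun x => k * p * deriv f x := by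
  funext x
  simp only [deriv_const_mul_field', deriv_sub_const, mul_assoc]

lemma hasDerivAt_deriv_sin_comp {φ : ℝ → ℝ} {x : ℝ}
    (hφ : ∀ᶠ y in 𝓝 x, DifferentiableAt ℝ φ y) (hφ' : DifferentiableAt ℝ (deriv φ) x) :
    HasDerivAt (deriv fun y => sin (φ y))
      (-sin (φ x) * deriv φ x ^ 2 + cos (φ x) * deriv (deriv φ) x) x := by
  have hderiv : deriv (fun y => sin (φ y)) =ᶠ[𝓝 x] fun y => cos (φ y) * deriv φ y :=
    hφ.mono fun y hy => deriv_sin hy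
  have hφx := (hφ.self_of_nhds).hasDerivAt
  refine ((hφx.cos.mul hφ'.hasDerivAt).congr_of_eventuallyEq hderiv).congr_deriv ?_
  ring

theorem stmt_10_general (ζ πf c a : ℝ)
    (hζ : 0 < ζ) (hπf : 0 < πf) (hc : 0 ≤ c)
    (ha : a ∈ Set.Ioo (0 : ℝ) 1)
    (A φ : ℝ → ℝ) (s : Set ℝ) (hs : IsOpen s) (h1 : (1 : ℝ) ∈ s)
    (hφdiff : ∀ ω ∈ s, DifferentiableAt ℝ φ ω)
    (hφdiff2 : ∀ ω ∈ s, DifferentiableAt ℝ (deriv φ) ω)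
    (hApos : ∀ ω ∈ s, 0 < A ω)
    (heq1 : ∀ ω ∈ s, πf * Real.sin (φ ω) = ζ * A ω * ω + c)
    (heq2 : ∀ ω ∈ s, 2 * πf * Real.cos (φ ω) = A ω * (1 - ω ^ 2))
    (hφ' : deriv φ 1 ≠ 0) :
    deriv (deriv (fun ω => (a / (2 * ζ)) * (πf * Real.sin (φ ω) - c))) 1
        = -(a * πf / (2 * ζ)) * (deriv φ 1) ^ 2 ∧
      deriv (deriv (fun ω => (a / (2 * ζ)) * (πf * Real.sin (φ ω) - c))) 1 < 0 ∧
      IsLocalMax (fun ω => (a / (2 * ζ)) * (πf * Real.sin (φ ω) - c)) 1 := by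
  have hcos : cos (φ 1) = 0 := by
    simpa [hπf.ne'] using heq2 1 h1
  have hsin : sin (φ 1) = 1 := by
    refine Real.sin_eq_one_of_cos_eq_zero_of_pos hcos (pos_of_mul_pos_right ?_ hπf.le)
    nlinarith [heq1 1 h1, hApos 1 h1]
  have hv' := deriv_const_mul_sub_const (a / (2 * ζ)) πf c fun ω => sin (φ ω)
  have hv'' : deriv (deriv fun ω => (a / (2 * ζ)) * (πf * sin (φ ω) - c)) 1
      = -(a * πf / (2 * ζ)) * deriv φ 1 ^ 2 := by
    have hφ : ∀ᶠ y in 𝓝 1, DifferentiableAt ℝ φ y :=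
      eventually_of_mem (hs.mem_nhds h1) hφdiff
    rw [hv', deriv_const_mul_field']
    dsimp only
    rw [(hasDerivAt_deriv_sin_comp hφ (hφdiff2 1 h1)).deriv, hsin, hcos]
    ring
  have hneg : -(a * πf / (2 * ζ)) * deriv φ 1 ^ 2 < 0 := by
    have := ha.1
    exact mul_neg_of_neg_of_pos (neg_neg_of_pos (by positivity)) (by positivity)
  refine ⟨hv'', hv'' ▸ hneg, isLocalMax_of_deriv_deriv_neg (hv'' ▸ hneg) ?_ ?_⟩
  · rw [hv']
    dsimp only
    rw [deriv_sin (hφdiff 1 h1), hcos]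
    ring
  · have := (hφdiff 1 h1).continuousAt
    fun_prop

theorem stmt_10 (ζ πf πσ c a : ℝ)
    (hζ : 0 < ζ) (hπf : 0 < πf) (hπσ : 0 ≤ πσ) (hc : 0 ≤ c) (hcπf : c < πf)
    (ha : a ∈ Set.Ioo (0 : ℝ) 1)
    (A φ : ℝ → ℝ) (s : Set ℝ) (hs : IsOpen s) (h1 : (1 : ℝ) ∈ s)
    (hAdiff : ∀ ω ∈ s, DifferentiableAt ℝ A ω)
    (hφdiff : ∀ ω ∈ s, DifferentiableAt ℝ φ ω)
    (hφdiff2 : ∀ ω ∈ s, DifferentiableAt ℝ (deriv φ) ω)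
    (hApos : ∀ ω ∈ s, 0 < A ω)
    (heq1 : ∀ ω ∈ s, πf * Real.sin (φ ω) = ζ * A ω * ω + c)
    (heq2 : ∀ ω ∈ s, 2 * πf * Real.cos (φ ω) = A ω * (1 - ω ^ 2))
    (hφ' : deriv φ 1 ≠ 0) :
    deriv (deriv (fun ω => (a / (2 * ζ)) * (πf * Real.sin (φ ω) - c))) 1
        = -(a * πf / (2 * ζ)) * (deriv φ 1) ^ 2 ∧
      deriv (deriv (fun ω => (a / (2 * ζ)) * (πf * Real.sin (φ ω) - c))) 1 < 0 ∧
      IsLocalMax (fun ω => (a / (2 * ζ)) * (πf * Real.sin (φ ω) - c)) 1 :=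
  stmt_10_general ζ πf c a hζ hπf hc ha A φ s hs h1 hφdiff hφdiff2 hApos heq1 heq2 hφ'
end
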